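/- For every ρ ∈ P(∂Ω) and every potential φ_ρ ∈ X for ρ, the supremum of φ_ρ over ℝ^N equals the supremum of φ_ρ over ∂Ω, i.e. sup_{x∈ℝ^N} φ_ρ(x) = sup_{x∈∂Ω} φ_ρ(x). -/

import Mathlib

open MeasureTheory Metric Set Filter Topology Pointwise

noncomputable section

abbrev Euc (N : ℕ) := EuclideanSpace ℝ (Fin N)

/-- The set `X` of admissible potentials: Lipschitz with constant 1, vanishing at
infinity, with square-integrable (a.e.-defined) gradient. -/
def memX (N : ℕ) (φ : Euc N → ℝ) : Prop :=
  LipschitzWith 1 φ ∧ Tendsto φ (cocompact (Euc N)) (𝓝 0) ∧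
    Integrable (fun x => ‖gradient φ x‖ ^ 2) (volume : Measure (Euc N))

/-- The Born–Infeld action `I_ρ`. -/
def BIaction (N : ℕ) (ρ : Measure (Euc N)) (φ : Euc N → ℝ) : ℝ :=
  (∫ x, (1 - Real.sqrt (1 - ‖gradient φ x‖ ^ 2))) - ∫ x, φ x ∂ρ

/-- `φ` is a potential for `ρ`: a minimizer of `I_ρ` over `X`. -/
def isPotential (N : ℕ) (ρ : Measure (Euc N)) (φ : Euc N → ℝ) : Prop :=
  memX N φ ∧ ∀ ψ : Euc N → ℝ, memX N ψ → BIaction N ρ φ ≤ BIaction N ρ ψ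

/-- Borel probability measures supported on `∂Ω`. -/
def memP (N : ℕ) (Ω : Set (Euc N)) (ρ : Measure (Euc N)) : Prop :=
  IsProbabilityMeasure ρ ∧ ρ (frontier Ω)ᶜ = 0

/-- Bounded domain. -/
def isBoundedDomain (N : ℕ) (Ω : Set (Euc N)) : Prop :=
  IsOpen Ω ∧ Ω.Nonempty ∧ IsConnected Ω ∧ Bornology.IsBounded Ω

/-- Equilibrium measure with its equilibrium potential. -/
def isEquilibrium (N : ℕ) (Ω : Set (Euc N)) (ρs : Measure (Euc N)) (φs : Euc N → ℝ) : Prop :=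
  memP N Ω ρs ∧ isPotential N ρs φs ∧
    ∀ (μ : Measure (Euc N)) (φμ : Euc N → ℝ), memP N Ω μ → isPotential N μ φμ →
      BIaction N μ φμ ≤ BIaction N ρs φs

/-- The (closed) support of a Borel measure. -/
def msupport (N : ℕ) (ρ : Measure (Euc N)) : Set (Euc N) :=
  {x | ∀ U : Set (Euc N), IsOpen U → x ∈ U → ρ U ≠ 0}

/-- Weak solution of the Born–Infeld equation with datum `ρ`. -/
def isWeakSol (N : ℕ) (ρ : Measure (Euc N)) (φ : Euc N → ℝ) : Prop :=
  ∀ ψ : Euc N → ℝ, ContDiff ℝ (⊤ : ℕ∞) ψ → HasCompactSupport ψ →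
    (∫ x, (inner ℝ (gradient φ x) (gradient ψ x) : ℝ) / Real.sqrt (1 - ‖gradient φ x‖ ^ 2)) =
      ∫ x, ψ x ∂ρ

/-- The `L²`-norm of the gradient. -/
def gradNorm2 (N : ℕ) (φ : Euc N → ℝ) : ℝ :=
  (∫ x, ‖gradient φ x‖ ^ 2) ^ (1/2 : ℝ)

namespace StmtAux

open MeasureTheory Metric Set Filter Topology

variable {N : ℕ}

lemma norm_gradient_eq (f : Euc N → ℝ) (x : Euc N) : ‖gradient f x‖ = ‖fderiv ℝ f x‖ :=
  LinearIsometryEquiv.norm_map _ _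

lemma gradient_eq_zero_iff {f : Euc N → ℝ} {x : Euc N} :
    gradient f x = 0 ↔ fderiv ℝ f x = 0 := by
  rw [gradient, LinearIsometryEquiv.map_eq_zero_iff]

lemma norm_fderiv_le_one {f : Euc N → ℝ} (hf : LipschitzWith 1 f) (x : Euc N) :
    ‖fderiv ℝ f x‖ ≤ 1 := by
  simpa using norm_fderiv_le_of_lipschitz ℝ (f := f) (x₀ := x) hf

lemma sqrt_le_one' {t : ℝ} : Real.sqrt (1 - t ^ 2) ≤ 1 :=
  Real.sqrt_le_one.2 (by nlinarith [sq_nonneg t])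

lemma integrand_nonneg (t : ℝ) : 0 ≤ 1 - Real.sqrt (1 - t ^ 2) := by
  have := sqrt_le_one' (t := t); linarith

lemma integrand_le_sq {t : ℝ} (ht : t ^ 2 ≤ 1) : 1 - Real.sqrt (1 - t ^ 2) ≤ t ^ 2 := by
  have h1 : (0:ℝ) ≤ 1 - t ^ 2 := by linarith
  have h2 : (1 - t ^ 2) ≤ Real.sqrt (1 - t ^ 2) := by
    have h3 : (1 - t^2) ^ 2 ≤ 1 - t ^ 2 := by nlinarith
    calc 1 - t ^ 2 = Real.sqrt ((1 - t^2) ^ 2) := (Real.sqrt_sq h1).symm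
      _ ≤ Real.sqrt (1 - t ^ 2) := Real.sqrt_le_sqrt h3
  linarith

lemma meas_gradnorm (f : Euc N → ℝ) :
    Measurable fun x : Euc N => ‖gradient f x‖ := by
  simp_rw [norm_gradient_eq]
  exact (measurable_fderiv ℝ f).norm

lemma integrable_integrand {f : Euc N → ℝ} (hl : LipschitzWith 1 f)
    (hi : Integrable (fun x => ‖gradient f x‖ ^ 2) (volume : Measure (Euc N))) :
    Integrable (fun x => 1 - Real.sqrt (1 - ‖gradient f x‖ ^ 2))
      (volume : Measure (Euc N)) := by
  refine hi.mono' ?_ (Filter.Eventually.of_forall fun x => ?_)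
  · exact ((continuous_const.sub ((Real.continuous_sqrt).comp
      (continuous_const.sub (continuous_pow 2)))).measurable.comp
      (meas_gradnorm f)).aestronglyMeasurable
  · have hle : ‖gradient f x‖ ^ 2 ≤ 1 := by
      rw [norm_gradient_eq]
      have := norm_fderiv_le_one hl x
      nlinarith [norm_nonneg (fderiv ℝ f x)]
    rw [Real.norm_eq_abs, abs_of_nonneg (integrand_nonneg _)]
    have := integrand_le_sq hle
    simpa [Real.norm_eq_abs, sq_abs] using this

end StmtAux
namespace StmtAux2
open MeasureTheory Metric Set Filter Topology StmtAux

variable {N : ℕ}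

lemma ae_fderiv_min (φ : Euc N → ℝ) (hlip : LipschitzWith 1 φ) (M : ℝ) :
    ∀ᵐ x : Euc N, (DifferentiableAt ℝ φ x ∧ DifferentiableAt ℝ (fun y => min (φ y) M) x) ∧
      (fderiv ℝ (fun y => min (φ y) M) x = fderiv ℝ φ x ∨
        fderiv ℝ (fun y => min (φ y) M) x = 0) := by
  have hψl : LipschitzWith 1 (fun y => min (φ y) M) := hlip.min_const M
  filter_upwards [hlip.ae_differentiableAt (μ := (volume : Measure (Euc N))),
    hψl.ae_differentiableAt (μ := (volume : Measure (Euc N)))] with x h1 h2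
  refine ⟨⟨h1, h2⟩, ?_⟩
  rcases lt_trichotomy (φ x) M with h | h | h
  · left
    apply Filter.EventuallyEq.fderiv_eq
    have hmem : {y | φ y < M} ∈ 𝓝 x :=
      (isOpen_lt hlip.continuous continuous_const).mem_nhds h
    filter_upwards [hmem] with y hy
    exact min_eq_left hy.le
  · left
    have hψx : min (φ x) M = M := by rw [h, min_self]
    have hmax : fderiv ℝ (fun y => min (φ y) M) x = 0 := by
      have hm : IsLocalMax (fun y => min (φ y) M) x :=
        Filter.Eventually.of_forall fun y => by
          simp only [hψx]; exact min_le_right _ _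
      exact hm.hasFDerivAt_eq_zero h2.hasFDerivAt
    have hmin : fderiv ℝ φ x - fderiv ℝ (fun y => min (φ y) M) x = 0 := by
      have hm : IsLocalMin (fun y => φ y - min (φ y) M) x :=
        Filter.Eventually.of_forall fun y => by
          have h1' : min (φ y) M ≤ φ y := min_le_left _ _
          show φ x - min (φ x) M ≤ φ y - min (φ y) M
          have h2' : φ x - min (φ x) M = 0 := by rw [hψx, h]; ring
          rw [h2']; linarith
      exact hm.hasFDerivAt_eq_zero (h1.hasFDerivAt.sub h2.hasFDerivAt)
    rw [hmax] at hmin ⊢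
    rw [sub_zero] at hmin
    exact hmin.symm
  · right
    have hmem : {y | M < φ y} ∈ 𝓝 x :=
      (isOpen_lt continuous_const hlip.continuous).mem_nhds h
    have hev : (fun y => min (φ y) M) =ᶠ[𝓝 x] fun _ => M := by
      filter_upwards [hmem] with y hy
      exact min_eq_right hy.le
    rw [hev.fderiv_eq]
    exact fderiv_const_apply M

end StmtAux2
namespace StmtAux3
open MeasureTheory Metric Set Filter Topology StmtAux

variable {N : ℕ}

lemma conv_hasFDerivAt {θ : Euc N → ℝ} {L : NNReal} (hθ : LipschitzWith L θ)
    (h0 : ∀ᵐ x : Euc N, fderiv ℝ θ x = 0)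
    {k : Euc N → ℝ} (hk : Continuous k) (hks : HasCompactSupport k) (x₀ : Euc N) :
    HasFDerivAt (fun x => ∫ a, k a * θ (x - a)) (0 : Euc N →L[ℝ] ℝ) x₀ := by
  have hθc := hθ.continuous
  have hz : ∀ᵐ z : Euc N, HasFDerivAt θ (0 : Euc N →L[ℝ] ℝ) z := by
    filter_upwards [hθ.ae_differentiableAt (μ := (volume : Measure (Euc N))), h0] with z h1 h2
    have := h1.hasFDerivAt
    rwa [h2] at this
  have mp : MeasurePreserving (fun a : Euc N => x₀ - a) volume volume := by
    have he : (fun a : Euc N => x₀ - a) = (fun a : Euc N => x₀ + a) ∘ fun a : Euc N => -a := by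
      funext a; simp [sub_eq_add_neg]
    rw [he]
    exact (measurePreserving_add_left volume x₀).comp (Measure.measurePreserving_neg volume)
  have hz' : ∀ᵐ a : Euc N, HasFDerivAt θ (0 : Euc N →L[ℝ] ℝ) (x₀ - a) :=
    ae_of_ae_map mp.aemeasurable (mp.map_eq.symm ▸ hz)
  have hcont : ∀ x : Euc N, Continuous fun a : Euc N => k a * θ (x - a) := fun x =>
    hk.mul (hθc.comp (continuous_const.sub continuous_id))
  have hcs : ∀ x : Euc N, HasCompactSupport fun a : Euc N => k a * θ (x - a) := fun x =>
    hks.mul_right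
  have key := hasFDerivAt_integral_of_dominated_loc_of_lip (μ := (volume : Measure (Euc N)))
      (𝕜 := ℝ) (F := fun (x : Euc N) (a : Euc N) => k a * θ (x - a))
      (F' := fun _ : Euc N => (0 : Euc N →L[ℝ] ℝ))
      (x₀ := x₀) (bound := fun a => (L : ℝ) * |k a|) (s := ball x₀ 1) (ball_mem_nhds x₀ one_pos)
      (Filter.Eventually.of_forall fun x => (hcont x).aestronglyMeasurable)
      ((hcont x₀).integrable_of_hasCompactSupport (hcs x₀))
      aestronglyMeasurable_const
      ?_ ?_ ?_
  · simpa using key.2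
  · refine Filter.Eventually.of_forall fun a => ?_
    have hl : LipschitzWith (Real.nnabs ((L:ℝ) * |k a|)) fun x : Euc N => k a * θ (x - a) := by
      apply LipschitzWith.of_dist_le_mul
      intro x y
      rw [Real.coe_nnabs, abs_of_nonneg (by positivity), Real.dist_eq]
      have he : k a * θ (x - a) - k a * θ (y - a) = k a * (θ (x - a) - θ (y - a)) := by ring
      rw [he, abs_mul]
      have hd := hθ.dist_le_mul (x - a) (y - a)
      rw [Real.dist_eq, dist_sub_right] at hd
      calc |k a| * |θ (x - a) - θ (y - a)| ≤ |k a| * ((L:ℝ) * dist x y) :=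
            mul_le_mul_of_nonneg_left hd (abs_nonneg _)
        _ = (L:ℝ) * |k a| * dist x y := by ring
    exact hl.lipschitzOnWith
  · exact ((hk.abs).integrable_of_hasCompactSupport hks.abs).const_mul _
  · filter_upwards [hz'] with a ha
    have h1 : HasFDerivAt (fun x : Euc N => x - a) (ContinuousLinearMap.id ℝ (Euc N)) x₀ :=
      (hasFDerivAt_id x₀).sub_const a
    have h2 := ha.comp x₀ h1
    have h3 := h2.const_mul (k a)
    simpa [Function.comp] using h3

lemma conv_const {θ : Euc N → ℝ} {L : NNReal} (hθ : LipschitzWith L θ)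
    (h0 : ∀ᵐ x : Euc N, fderiv ℝ θ x = 0)
    {k : Euc N → ℝ} (hk : Continuous k) (hks : HasCompactSupport k) (x y : Euc N) :
    ∫ a, k a * θ (x - a) = ∫ a, k a * θ (y - a) :=
  is_const_of_fderiv_eq_zero
    (fun z => (conv_hasFDerivAt hθ h0 hk hks z).differentiableAt)
    (fun z => (conv_hasFDerivAt hθ h0 hk hks z).fderiv) x y

end StmtAux3
namespace StmtAux4
open MeasureTheory Metric Set Filter Topology StmtAux StmtAux3

variable {N : ℕ}

lemma theta_nonpos (hN : 0 < N) {θ : Euc N → ℝ} {L : NNReal} (hθ : LipschitzWith L θ)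
    (h0 : ∀ᵐ x : Euc N, fderiv ℝ θ x = 0) (hnn : ∀ x, 0 ≤ θ x)
    (htd : Tendsto θ (cocompact (Euc N)) (𝓝 0)) (x₀ : Euc N) : θ x₀ ≤ 0 := by
  by_contra hpos
  push_neg at hpos
  obtain ⟨r, hr, hball⟩ : ∃ r > 0, ∀ z ∈ ball x₀ r, θ x₀ / 2 < θ z := by
    have hc : ContinuousAt θ x₀ := hθ.continuous.continuousAt
    have hev : ∀ᶠ z in 𝓝 x₀, θ x₀ / 2 < θ z :=
      hc.eventually (eventually_gt_nhds (by linarith))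
    rcases Metric.eventually_nhds_iff_ball.1 hev with ⟨r, hr, h⟩
    exact ⟨r, hr, h⟩
  set k : ContDiffBump (0 : Euc N) := ⟨r/2, r, by linarith, by linarith⟩ with hk
  have hkc : Continuous (k : Euc N → ℝ) := k.continuous
  have hkcs : HasCompactSupport (k : Euc N → ℝ) := k.hasCompactSupport
  set G : Euc N → ℝ := fun x => ∫ a, (k : Euc N → ℝ) a * θ (x - a) with hG
  have hconst : ∀ x y, G x = G y := fun x y => conv_const hθ h0 hkc hkcs x y
  have hGint : ∀ x : Euc N, Integrable (fun a : Euc N => (k : Euc N → ℝ) a * θ (x - a)) :=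
    fun x => ((hkc.mul (hθ.continuous.comp
      (continuous_const.sub continuous_id))).integrable_of_hasCompactSupport hkcs.mul_right)
  -- lower bound for G x₀
  set P : ℝ := (θ x₀ / 2) * (volume (closedBall (0 : Euc N) (r/2))).toReal with hPdef
  have hvolpos : 0 < (volume (closedBall (0 : Euc N) (r/2))).toReal :=
    ENNReal.toReal_pos (measure_closedBall_pos volume 0 (by linarith)).ne'
      measure_closedBall_lt_top.ne
  have hP : 0 < P := by
    apply mul_pos (by linarith) hvolpos
  have hlow : P ≤ G x₀ := by
    have hind : Integrable ((closedBall (0 : Euc N) (r/2)).indicator fun _ => θ x₀ / 2) := by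
      rw [integrable_indicator_iff measurableSet_closedBall]
      exact integrableOn_const measure_closedBall_lt_top.ne
    have hpt : ∀ a, (closedBall (0 : Euc N) (r/2)).indicator (fun _ => θ x₀ / 2) a ≤
        (k : Euc N → ℝ) a * θ (x₀ - a) := by
      intro a
      by_cases ha : a ∈ closedBall (0 : Euc N) (r/2)
      · rw [Set.indicator_of_mem ha]
        have hk1 : (k : Euc N → ℝ) a = 1 := k.one_of_mem_closedBall ha
        have hmem : x₀ - a ∈ ball x₀ r := by
          rw [mem_ball, dist_eq_norm]
          have : x₀ - a - x₀ = -a := by abel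
          rw [this, norm_neg]
          have := mem_closedBall_zero_iff.1 ha
          linarith
        have := hball _ hmem
        rw [hk1, one_mul]
        linarith
      · rw [Set.indicator_of_notMem ha]
        exact mul_nonneg k.nonneg (hnn _)
    have hcalc := integral_mono hind (hGint x₀) hpt
    have heq : ∫ a, (closedBall (0 : Euc N) (r/2)).indicator (fun _ => θ x₀ / 2) a = P := by
      rw [integral_indicator_const _ measurableSet_closedBall, smul_eq_mul, hPdef, measureReal_def]
      ring
    rw [heq] at hcalc
    exact hcalc
  set I : ℝ := ∫ a, (k : Euc N → ℝ) a with hI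
  have hI0 : 0 ≤ I := integral_nonneg k.nonneg'
  have hkint : Integrable (k : Euc N → ℝ) := hkc.integrable_of_hasCompactSupport hkcs
  set ε : ℝ := P / (2 * (I + 1)) with hε
  have hεpos : 0 < ε := by positivity
  obtain ⟨K, hK, hKs⟩ : ∃ K : Set (Euc N), IsCompact K ∧ ∀ x ∉ K, θ x < ε := by
    have hmem := htd (Metric.ball_mem_nhds (0 : ℝ) hεpos)
    rcases mem_cocompact.1 hmem with ⟨K, hK, hsub⟩
    refine ⟨K, hK, fun x hx => ?_⟩
    have := hsub hx
    rw [Set.mem_preimage, mem_ball_zero_iff, Real.norm_eq_abs] at this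
    exact lt_of_abs_lt this
  obtain ⟨R, hR⟩ := hK.isBounded.subset_closedBall 0
  set R' : ℝ := max R 0 with hR'
  set y : Euc N := EuclideanSpace.single (⟨0, hN⟩ : Fin N) (R' + r + 1) with hy
  have hynorm : ‖y‖ = R' + r + 1 := by
    rw [hy, EuclideanSpace.norm_single, Real.norm_eq_abs, abs_of_nonneg]
    have : (0:ℝ) ≤ R' := le_max_right R 0
    linarith
  have hup : G y ≤ I * ε := by
    have h1 : ∀ a, (k : Euc N → ℝ) a * θ (y - a) ≤ (k : Euc N → ℝ) a * ε := by
      intro a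
      by_cases hka : (k : Euc N → ℝ) a = 0
      · rw [hka, zero_mul, zero_mul]
      · have hmem : a ∈ ball (0 : Euc N) r := by
          have := Function.mem_support.2 hka
          rwa [k.support_eq] at this
        refine mul_le_mul_of_nonneg_left ?_ k.nonneg
        refine le_of_lt (hKs _ fun hyK => ?_)
        have h2 : ‖y - a‖ ≤ R' := by
          have := hR hyK
          rw [mem_closedBall_zero_iff] at this
          exact le_trans this (le_max_left R 0)
        have h4 : ‖y‖ - ‖a‖ ≤ ‖y - a‖ := norm_sub_norm_le y a
        have h5 : ‖a‖ < r := mem_ball_zero_iff.1 hmem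
        rw [hynorm] at h4
        linarith
    calc G y ≤ ∫ a, (k : Euc N → ℝ) a * ε := integral_mono (hGint y) (hkint.mul_const ε) h1
      _ = I * ε := by rw [integral_mul_const]
  have hconst' : G x₀ = G y := hconst x₀ y
  have h6 : I * ε ≤ P / 2 := by
    have h7 : I * ε ≤ (I + 1) * ε := by nlinarith
    have h8 : (I + 1) * ε = P / 2 := by
      rw [hε]
      field_simp
    linarith
  linarith [hlow, hup, hP, hconst'.le, hconst'.ge]

end StmtAux4
open StmtAux StmtAux2 StmtAux3 StmtAux4

/-- Every potential attains its supremum over ℝ^N on the boundary of Ω: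
sup over all of ℝ^N equals the sup over ∂Ω. -/
theorem stmt_8 (N : ℕ) (hN : 3 ≤ N) (Ω : Set (Euc N)) (hΩ : isBoundedDomain N Ω)
    (ρ : Measure (Euc N)) (hρ : memP N Ω ρ)
    (φ : Euc N → ℝ) (hφ : isPotential N ρ φ) :
    (⨆ x : Euc N, φ x) = ⨆ x : frontier Ω, φ x := by
  obtain ⟨hopen, hne, hconn, hbdd⟩ := hΩ
  obtain ⟨hprob, hnull⟩ := hρ
  obtain ⟨⟨hlip, htd, hint⟩, hmin⟩ := hφ
  haveI := hprob
  haveI : Nontrivial (Euc N) := by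
    refine ⟨⟨EuclideanSpace.single (⟨0, by omega⟩ : Fin N) (1 : ℝ), 0, fun h => ?_⟩⟩
    have h2 := congrArg norm h
    rw [EuclideanSpace.norm_single] at h2
    simp at h2
  -- frontier is nonempty
  have hfr_ne : (frontier Ω).Nonempty := by
    rw [Set.nonempty_iff_ne_empty]
    intro hemp
    have hclopen : IsClopen Ω := isClopen_iff_frontier_eq_empty.2 hemp
    rcases isClopen_iff.1 hclopen with h1 | h1
    · exact hne.ne_empty h1
    · rw [h1] at hbdd
      exact NormedSpace.unbounded_univ ℝ (Euc N) hbdd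
  haveI : Nonempty (frontier Ω) := hfr_ne.to_subtype
  -- φ is globally bounded
  obtain ⟨C, hC⟩ : ∃ C : ℝ, ∀ x, |φ x| ≤ C := by
    have h1 : ∀ᶠ x in cocompact (Euc N), ‖φ x‖ < 1 := by
      have h2 := htd (Metric.ball_mem_nhds (0 : ℝ) one_pos)
      filter_upwards [h2] with x hx
      rwa [Set.mem_preimage, mem_ball_zero_iff] at hx
    obtain ⟨K, hK, hsub⟩ := mem_cocompact.1 h1
    obtain ⟨C₀, hC₀⟩ := hK.exists_bound_of_continuousOn hlip.continuous.continuousOn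
    refine ⟨max C₀ 1, fun x => ?_⟩
    by_cases hx : x ∈ K
    · exact le_trans (by simpa using hC₀ x hx) (le_max_left _ _)
    · have h3 := hsub hx
      rw [Set.mem_setOf_eq, Real.norm_eq_abs] at h3
      exact le_trans h3.le (le_max_right _ _)
  have hbddrange : BddAbove (Set.range φ) := by
    refine ⟨C, ?_⟩
    rintro y ⟨x, rfl⟩
    exact le_trans (le_abs_self _) (hC x)
  have hbddrange' : BddAbove (Set.range fun x : frontier Ω => φ x) := by
    refine ⟨C, ?_⟩
    rintro y ⟨x, rfl⟩
    exact le_trans (le_abs_self _) (hC x)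
  have hfle : ∀ x ∈ frontier Ω, φ x ≤ ⨆ x : frontier Ω, φ x := fun x hx =>
    le_ciSup hbddrange' (⟨x, hx⟩ : frontier Ω)
  have hρae : ∀ᵐ x ∂ρ, x ∈ frontier Ω := by
    rw [MeasureTheory.ae_iff]
    exact hnull
  have hφρint : Integrable φ ρ :=
    (integrable_const C).mono' hlip.continuous.aestronglyMeasurable
      (Filter.Eventually.of_forall fun x => by simpa using hC x)
  have hintle : ∫ x, φ x ∂ρ ≤ ⨆ x : frontier Ω, φ x := by
    calc ∫ x, φ x ∂ρ ≤ ∫ _x, (⨆ x : frontier Ω, φ x) ∂ρ :=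
          integral_mono_ae hφρint (integrable_const _) (hρae.mono fun x hx => hfle x hx)
      _ = ⨆ x : frontier Ω, φ x := by simp [measure_univ]
  have hA : 0 ≤ ∫ x, (1 - Real.sqrt (1 - ‖gradient φ x‖ ^ 2)) :=
    integral_nonneg fun x => integrand_nonneg _
  -- M is nonnegative
  have hM0 : 0 ≤ ⨆ x : frontier Ω, φ x := by
    by_contra hMneg
    push_neg at hMneg
    have h0X : memX N (fun _ => (0 : ℝ)) := by
      refine ⟨(LipschitzWith.const (0 : ℝ)).weaken zero_le, tendsto_const_nhds, ?_⟩
      have he : (fun x : Euc N => ‖gradient (fun _ => (0 : ℝ)) x‖ ^ 2) = fun _ => 0 := by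
        funext x
        rw [gradient, fderiv_const_apply]
        simp
      rw [he]
      exact integrable_zero _ _ _
    have hBI0 : BIaction N ρ (fun _ => (0 : ℝ)) = 0 := by
      unfold BIaction
      have he : (fun x : Euc N => (1 - Real.sqrt (1 - ‖gradient (fun _ => (0 : ℝ)) x‖ ^ 2)))
          = fun _ => 0 := by
        funext x
        rw [gradient, fderiv_const_apply]
        simp
      rw [he]
      simp
    have hle := hmin _ h0X
    rw [hBI0] at hle
    unfold BIaction at hle
    linarith
  -- the main claim: φ is everywhere at most M
  have hall : ∀ x, φ x ≤ ⨆ x : frontier Ω, φ x := by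
    by_contra hctr
    push_neg at hctr
    obtain ⟨x₀, hx₀⟩ := hctr
    set M : ℝ := ⨆ x : frontier Ω, φ x with hMdef
    have hψlip : LipschitzWith 1 (fun y => min (φ y) M) := hlip.min_const M
    have hψtd : Tendsto (fun y => min (φ y) M) (cocompact (Euc N)) (𝓝 0) := by
      have h2 : Tendsto (fun y => min (φ y) M) (cocompact (Euc N)) (𝓝 (min 0 M)) :=
        htd.min tendsto_const_nhds
      rwa [min_eq_left hM0] at h2
    have hae := ae_fderiv_min φ hlip M
    have hnle : ∀ᵐ x : Euc N, ‖gradient (fun y => min (φ y) M) x‖ ≤ ‖gradient φ x‖ := by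
      filter_upwards [hae] with x hx
      rcases hx.2 with h | h
      · rw [norm_gradient_eq, norm_gradient_eq, h]
      · rw [norm_gradient_eq, h, norm_zero]
        exact norm_nonneg _
    have hψint : Integrable (fun x => ‖gradient (fun y => min (φ y) M) x‖ ^ 2)
        (volume : Measure (Euc N)) := by
      refine hint.mono' ?_ ?_
      · exact ((meas_gradnorm (fun y => min (φ y) M)).pow_const 2).aestronglyMeasurable
      · filter_upwards [hnle] with x hx
        rw [Real.norm_eq_abs, abs_of_nonneg (by positivity)]
        exact pow_le_pow_left₀ (norm_nonneg _) hx 2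
    have hmemψ : memX N (fun y => min (φ y) M) := ⟨hψlip, hψtd, hψint⟩
    have hBI := hmin _ hmemψ
    have hρeq : ∫ x, min (φ x) M ∂ρ = ∫ x, φ x ∂ρ := by
      apply integral_congr_ae
      filter_upwards [hρae] with x hx
      exact min_eq_left (hfle x hx)
    have ig : Integrable (fun x => 1 - Real.sqrt (1 - ‖gradient φ x‖ ^ 2))
        (volume : Measure (Euc N)) := integrable_integrand hlip hint
    have ih : Integrable (fun x => 1 - Real.sqrt (1 - ‖gradient (fun y => min (φ y) M) x‖ ^ 2))
        (volume : Measure (Euc N)) := integrable_integrand hψlip hψint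
    have hhg : ∀ᵐ x : Euc N, (1 - Real.sqrt (1 - ‖gradient (fun y => min (φ y) M) x‖ ^ 2)) ≤
        (1 - Real.sqrt (1 - ‖gradient φ x‖ ^ 2)) := by
      filter_upwards [hnle] with x hx
      have h1 : 1 - ‖gradient φ x‖ ^ 2 ≤ 1 - ‖gradient (fun y => min (φ y) M) x‖ ^ 2 := by
        nlinarith [norm_nonneg (gradient (fun y => min (φ y) M) x)]
      have h2 := Real.sqrt_le_sqrt h1
      linarith
    have hgl : (∫ x, (1 - Real.sqrt (1 - ‖gradient φ x‖ ^ 2))) ≤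
        ∫ x, (1 - Real.sqrt (1 - ‖gradient (fun y => min (φ y) M) x‖ ^ 2)) := by
      unfold BIaction at hBI
      rw [hρeq] at hBI
      linarith
    have hlg := integral_mono_ae ih ig hhg
    have heq0 : ∫ x, ((1 - Real.sqrt (1 - ‖gradient φ x‖ ^ 2)) -
        (1 - Real.sqrt (1 - ‖gradient (fun y => min (φ y) M) x‖ ^ 2))) = 0 := by
      rw [integral_sub ig ih]
      linarith
    have hdeq := (integral_eq_zero_iff_of_nonneg_ae
      (by filter_upwards [hhg] with x hx; simpa using sub_nonneg.2 hx) (ig.sub ih)).1 heq0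
    have hfeq : ∀ᵐ x : Euc N, DifferentiableAt ℝ φ x ∧
        DifferentiableAt ℝ (fun y => min (φ y) M) x ∧
        fderiv ℝ φ x = fderiv ℝ (fun y => min (φ y) M) x := by
      filter_upwards [hae, hdeq] with x hx hdx
      obtain ⟨⟨h1, h2⟩, hcase⟩ := hx
      refine ⟨h1, h2, ?_⟩
      rcases hcase with h | h
      · exact h.symm
      · rw [h]
        have hdx' : (1 - Real.sqrt (1 - ‖gradient φ x‖ ^ 2)) -
            (1 - Real.sqrt (1 - ‖gradient (fun y => min (φ y) M) x‖ ^ 2)) = 0 := by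
          simpa using hdx
        have hψ0 : ‖gradient (fun y => min (φ y) M) x‖ = 0 := by
          rw [norm_gradient_eq, h, norm_zero]
        rw [hψ0] at hdx'
        rw [show (1:ℝ) - (0:ℝ) ^ 2 = 1 by norm_num, Real.sqrt_one] at hdx'
        have hs : Real.sqrt (1 - ‖gradient φ x‖ ^ 2) = 1 := by linarith
        have h1eq : 1 - ‖gradient φ x‖ ^ 2 = 1 := Real.sqrt_eq_one.1 hs
        have hn0 : ‖gradient φ x‖ = 0 := by nlinarith [norm_nonneg (gradient φ x)]
        rw [norm_gradient_eq] at hn0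
        exact norm_eq_zero.1 hn0
    have hθf : ∀ᵐ x : Euc N, fderiv ℝ (fun y => φ y - min (φ y) M) x = 0 := by
      filter_upwards [hfeq] with x hx
      obtain ⟨h1, h2, h3⟩ := hx
      rw [fderiv_fun_sub h1 h2, h3, sub_self]
    have hθlip : LipschitzWith (1 + 1) (fun y => φ y - min (φ y) M) := hlip.sub hψlip
    have hθnn : ∀ x, 0 ≤ φ x - min (φ x) M := fun x => sub_nonneg.2 (min_le_left _ _)
    have hθtd : Tendsto (fun y => φ y - min (φ y) M) (cocompact (Euc N)) (𝓝 0) := by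
      have h2 := htd.sub hψtd
      simpa using h2
    have hfin : φ x₀ - min (φ x₀) M ≤ 0 :=
      theta_nonpos (by omega) hθlip hθf hθnn hθtd x₀
    rw [min_eq_right hx₀.le] at hfin
    linarith
  apply le_antisymm
  · exact ciSup_le hall
  · exact ciSup_le fun x => le_ciSup hbddrange (x : Euc N)
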